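/- arXiv:2510.17167 — 6 statements merged into one kernel-verified Lean document; each statement's English description precedes it below -/
import Mathlib

section
/- Suppose W|X=x ~ N(β₀ + β₁x, σ₂²) and Y|X=x ~ N(γ₀ + γ₁x, σ₃²) with β₁ ≠ 0 and σ₃² - γ₁²σ₂²/β₁² > 0. Define h(w,y) = (1/σ_wx) φ((y - γ_wx - (γ₁/β₁)w)/σ_wx) where φ is the standard normal density, γ_wx = γ₀ - γ₁β₀/β₁ and σ_wx² = σ₃² - γ₁²σ₂²/β₁². Then for all x and y, the density of Y given X=x equals ∫ h(w,y) p(w|x) dw. -/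
/-! Completing the square in `w`, the product of the `N(0, s²)` density at `u - a w` and the
`N(0, σ²)` density at `w - m` is the `N(0, s² + a² σ²)` density at `u - a m`, which does not
depend on `w`, times a Gaussian density in `w`, which integrates to one. With `a = γ₁ / β₁`,
`s² + a² σ₂² = σ₃²` and `u - a m = y - (γ₀ + γ₁ x)`. -/

open MeasureTheory

/-- The standard normal probability density function. -/
noncomputable def stdNormalPDF (z : ℝ) : ℝ :=
  (Real.sqrt (2 * Real.pi))⁻¹ * Real.exp (-z ^ 2 / 2)

noncomputable def normalPDF (σ z : ℝ) : ℝ :=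
  (1 / σ) * stdNormalPDF (z / σ)

theorem integral_stdNormalPDF : ∫ z, stdNormalPDF z = 1 := by
  have hπ : (0 : ℝ) < 2 * Real.pi := by positivity
  have hexp : (fun z : ℝ => Real.exp (-z ^ 2 / 2)) = fun z => Real.exp (-(1 / 2) * z ^ 2) := by
    ext z
    ring_nf
  simp only [stdNormalPDF, integral_const_mul, hexp, integral_gaussian]
  rw [div_div_eq_mul_div, div_one, mul_comm Real.pi, inv_mul_cancel₀ (Real.sqrt_pos.2 hπ).ne']

theorem integral_normalPDF_sub {σ : ℝ} (hσ : 0 < σ) (b : ℝ) :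
    ∫ w, normalPDF σ (w - b) = 1 := by
  simp only [normalPDF, integral_const_mul]
  rw [integral_sub_right_eq_self (fun w => stdNormalPDF (w / σ)) b, Measure.integral_comp_div,
    integral_stdNormalPDF, abs_of_pos hσ, smul_eq_mul, mul_one, one_div_mul_cancel hσ.ne']

theorem normalPDF_mul_normalPDF {s σ τ a : ℝ} (hs : 0 < s) (hσ : 0 < σ) (hτ : 0 < τ)
    (hτs : τ ^ 2 = s ^ 2 + a ^ 2 * σ ^ 2) (u m w : ℝ) :
    normalPDF s (u - a * w) * normalPDF σ (w - m)
      = normalPDF τ (u - a * m) *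
          normalPDF (s * σ / τ) (w - (σ ^ 2 * a * u + s ^ 2 * m) / τ ^ 2) := by
  have hexp : -((u - a * w) / s) ^ 2 / 2 + -((w - m) / σ) ^ 2 / 2
      = -((u - a * m) / τ) ^ 2 / 2
          + -((w - (σ ^ 2 * a * u + s ^ 2 * m) / τ ^ 2) / (s * σ / τ)) ^ 2 / 2 := by
    field_simp
    rw [hτs]
    ring
  simp only [normalPDF, stdNormalPDF]
  calc 1 / s * ((Real.sqrt (2 * Real.pi))⁻¹ * Real.exp (-((u - a * w) / s) ^ 2 / 2))
        * (1 / σ * ((Real.sqrt (2 * Real.pi))⁻¹ * Real.exp (-((w - m) / σ) ^ 2 / 2)))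
      = 1 / τ * (1 / (s * σ / τ)) * (Real.sqrt (2 * Real.pi))⁻¹ ^ 2
          * Real.exp (-((u - a * w) / s) ^ 2 / 2 + -((w - m) / σ) ^ 2 / 2) := by
        rw [Real.exp_add]
        field_simp
    _ = _ := by
        rw [hexp, Real.exp_add]
        ring

theorem integral_normalPDF_mul_normalPDF {s σ τ a : ℝ} (hs : 0 < s) (hσ : 0 < σ) (hτ : 0 < τ)
    (hτs : τ ^ 2 = s ^ 2 + a ^ 2 * σ ^ 2) (u m : ℝ) :
    ∫ w, normalPDF s (u - a * w) * normalPDF σ (w - m) = normalPDF τ (u - a * m) := by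
  simp only [normalPDF_mul_normalPDF hs hσ hτ hτs, integral_const_mul,
    integral_normalPDF_sub (by positivity : 0 < s * σ / τ), mul_one]

/-- Gaussian convolution identity: if `W|X=x ~ N(β₀+β₁x, σ₂²)` and
`Y|X=x ~ N(γ₀+γ₁x, σ₃²)` with `β₁ ≠ 0` and `σ₃² - γ₁²σ₂²/β₁² > 0`, then with
`γ_wx = γ₀ - γ₁β₀/β₁`, `σ_wx = √(σ₃² - γ₁²σ₂²/β₁²)` and
`h(w,y) = (1/σ_wx) φ((y - γ_wx - (γ₁/β₁)w)/σ_wx)`, the density of `Y` given `X = x`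
equals `∫ h(w,y) p(w|x) dw` for all `x, y`. -/
theorem stmt6 (β₀ β₁ γ₀ γ₁ σ₂ σ₃ : ℝ) (hβ₁ : β₁ ≠ 0) (hσ₂ : 0 < σ₂) (hσ₃ : 0 < σ₃)
    (hpos : 0 < σ₃ ^ 2 - γ₁ ^ 2 * σ₂ ^ 2 / β₁ ^ 2) :
    ∀ x y : ℝ,
      (1 / σ₃) * stdNormalPDF ((y - (γ₀ + γ₁ * x)) / σ₃)
        = ∫ w : ℝ,
            ((1 / Real.sqrt (σ₃ ^ 2 - γ₁ ^ 2 * σ₂ ^ 2 / β₁ ^ 2)) *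
              stdNormalPDF ((y - (γ₀ - γ₁ * β₀ / β₁) - (γ₁ / β₁) * w) /
                Real.sqrt (σ₃ ^ 2 - γ₁ ^ 2 * σ₂ ^ 2 / β₁ ^ 2)))
            * ((1 / σ₂) * stdNormalPDF ((w - (β₀ + β₁ * x)) / σ₂)) := by
  intro x y
  have hvar : σ₃ ^ 2 = Real.sqrt (σ₃ ^ 2 - γ₁ ^ 2 * σ₂ ^ 2 / β₁ ^ 2) ^ 2
      + (γ₁ / β₁) ^ 2 * σ₂ ^ 2 := by
    rw [Real.sq_sqrt hpos.le]
    ring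
  have hmean : y - (γ₀ - γ₁ * β₀ / β₁) - γ₁ / β₁ * (β₀ + β₁ * x) = y - (γ₀ + γ₁ * x) := by
    field_simp
    ring
  have h := integral_normalPDF_mul_normalPDF (Real.sqrt_pos.2 hpos) hσ₂ hσ₃ hvar
    (y - (γ₀ - γ₁ * β₀ / β₁)) (β₀ + β₁ * x)
  rw [hmean] at h
  exact h.symm
end

section
/- Let X, U, W, Y be discrete random variables with finite supports, strictly positive probability mass functions, and suppose the completeness condition holds: E[g(U)|W] = 0 a.s. implies g(U) = 0 a.s. Then under conditional independence X ⊥ Y | U and X ⊥ W | U, the matrix P(W|U) has full column rank, and P(y|X) = h(W,y)ᵀ P(W|X) where h(W,y) = (P(W|U)⁺ P(y|U))ᵀ and P(W|U)⁺ is a left inverse of P(W|U). Moreover if P(W|U) is square it is invertible and the solution is unique. -/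
/-!
Bayes' rule writes `P(W|U)` as `diag(P(w)) P(U|W)ᵀ diag(P(u))⁻¹`, so completeness of `P(U|W)`
makes `P(W|U)` injective, hence it has a left inverse `P⁺`. Then
`P(Y|X) = P(Y|U) P(U|X) = P(Y|U) P⁺ P(W|U) P(U|X) = P(Y|U) P⁺ P(W|X)`.
When `P(W|U)` is square, a left inverse is also a right inverse, which forces uniqueness.
-/

open Matrix

namespace Matrix

variable {m n K : Type*} [Fintype n] [Field K]

theorem exists_mul_eq_one_of_mulVec_injective [Fintype m] [DecidableEq n] {A : Matrix m n K}
    (hA : Function.Injective A.mulVec) : ∃ B : Matrix n m K, B * A = 1 := by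
  classical
  obtain ⟨g, hg⟩ := A.mulVecLin.exists_leftInverse_of_injective (LinearMap.ker_eq_bot.2 hA)
  refine ⟨LinearMap.toMatrix' g, ?_⟩
  rw [← LinearMap.toMatrix'_toLin' A, ← LinearMap.toMatrix'_comp, Matrix.toLin'_apply', hg,
    LinearMap.toMatrix'_id]

theorem eq_of_mul_eq_one_of_card_eq [Fintype m] [DecidableEq n] (hcard : Fintype.card m = Fintype.card n)
    {A : Matrix m n K} {B₁ B₂ : Matrix n m K} (h₁ : B₁ * A = 1) (h₂ : B₂ * A = 1) :
    B₁ = B₂ := by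
  classical
  have hright : A * B₂ = 1 := (mul_eq_one_comm_of_card_eq _ _ _ hcard).2 h₂
  calc B₁ = B₁ * (A * B₂) := by rw [hright, Matrix.mul_one]
    _ = B₂ := by rw [← Matrix.mul_assoc, h₁, Matrix.one_mul]

theorem mulVec_injective_of_bayes {pu : n → K} {pw : m → K} (hpu : ∀ u, pu u ≠ 0)
    (hpw : ∀ w, pw w ≠ 0) {Q : Matrix n m K} {P : Matrix m n K}
    (hP : ∀ w u, P w u = pw w * Q u w / pu u)
    (hQ : ∀ g : n → K, (∀ w, ∑ u, g u * Q u w = 0) → g = 0) :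
    Function.Injective P.mulVec := by
  refine (injective_iff_map_eq_zero P.mulVecLin).2 fun x hx => ?_
  have hscaled : (fun u => x u / pu u) = 0 := hQ _ fun w => by
    have hxw : ∑ u, P w u * x u = 0 := congrFun hx w
    calc ∑ u, x u / pu u * Q u w = (pw w)⁻¹ * ∑ u, P w u * x u := by
          rw [Finset.mul_sum]
          refine Finset.sum_congr rfl fun u _ => ?_
          rw [hP]
          field_simp [hpw w]
      _ = 0 := by rw [hxw, mul_zero]
  funext u
  simpa [hpu u] using congrFun hscaled u

end Matrix

theorem stmt8_general {𝒳 𝒰 𝒲 𝒴 : Type*} [Fintype 𝒳] [Fintype 𝒰] [Fintype 𝒲] [Fintype 𝒴]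
    [DecidableEq 𝒰]
    (pu : 𝒰 → ℝ) (pw : 𝒲 → ℝ)
    (PUW : Matrix 𝒰 𝒲 ℝ) (PWU : Matrix 𝒲 𝒰 ℝ)
    (PUX : Matrix 𝒰 𝒳 ℝ) (PWX : Matrix 𝒲 𝒳 ℝ)
    (PYU : Matrix 𝒴 𝒰 ℝ) (PYX : Matrix 𝒴 𝒳 ℝ)
    (hpu : ∀ u, 0 < pu u) (hpw : ∀ w, 0 < pw w)
    (hBayes : ∀ w u, PWU w u = pw w * PUW u w / pu u)
    (hcomplete : ∀ g : 𝒰 → ℝ, (∀ w, ∑ u, g u * PUW u w = 0) → g = 0)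
    (hYfact : PYX = PYU * PUX)
    (hWfact : PWX = PWU * PUX) :
    (∃ Pplus : Matrix 𝒰 𝒲 ℝ, Pplus * PWU = 1 ∧ PYX = PYU * Pplus * PWX) ∧
      (Fintype.card 𝒲 = Fintype.card 𝒰 →
        ∀ P1 P2 : Matrix 𝒰 𝒲 ℝ, P1 * PWU = 1 → P2 * PWU = 1 → P1 = P2) := by
  obtain ⟨Pplus, hPplus⟩ := exists_mul_eq_one_of_mulVec_injective <|
    mulVec_injective_of_bayes (fun u => (hpu u).ne') (fun w => (hpw w).ne') hBayes hcomplete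
  refine ⟨⟨Pplus, hPplus, ?_⟩, fun hcard _ _ => eq_of_mul_eq_one_of_card_eq hcard⟩
  rw [hYfact, hWfact, Matrix.mul_assoc PYU, ← Matrix.mul_assoc Pplus, hPplus, Matrix.one_mul]

/-- Discrete bridge-function identification (Corollary on discrete variables).
`X, U, W, Y` are discrete with finite supports, all probabilities strictly positive.
Completeness of `P(U|W)` (encoded as: `∑_u g(u) P(u|w) = 0` for all `w` implies `g ≡ 0`),
Bayes' rule relating `P(W|U)` to `P(U|W)`, and the conditional-independence
factorizations `P(Y|X) = P(Y|U) P(U|X)` (from `X ⊥ Y | U`) and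
`P(W|X) = P(W|U) P(U|X)` (from `X ⊥ W | U`) imply:
`P(W|U)` has full column rank, i.e. it has a left inverse `P⁺`, and
`P(y|X) = h(W,y)ᵀ P(W|X)` with `h(W,y) = (P(W|U)⁺ P(y|U))ᵀ`, i.e.
`P(Y|X) = P(Y|U) P⁺ P(W|X)`.  Moreover, if `P(W|U)` is square
(`|W| = |U|`) the left inverse (hence the solution) is unique. -/
theorem stmt8 {𝒳 𝒰 𝒲 𝒴 : Type*} [Fintype 𝒳] [Fintype 𝒰] [Fintype 𝒲] [Fintype 𝒴]
    [DecidableEq 𝒰] [DecidableEq 𝒲]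
    (pu : 𝒰 → ℝ) (pw : 𝒲 → ℝ)
    (PUW : Matrix 𝒰 𝒲 ℝ) (PWU : Matrix 𝒲 𝒰 ℝ)
    (PUX : Matrix 𝒰 𝒳 ℝ) (PWX : Matrix 𝒲 𝒳 ℝ)
    (PYU : Matrix 𝒴 𝒰 ℝ) (PYX : Matrix 𝒴 𝒳 ℝ)
    (hpu : ∀ u, 0 < pu u) (hpw : ∀ w, 0 < pw w)
    (hPUWpos : ∀ u w, 0 < PUW u w)
    (hBayes : ∀ w u, PWU w u = pw w * PUW u w / pu u)
    (hcomplete : ∀ g : 𝒰 → ℝ, (∀ w, ∑ u, g u * PUW u w = 0) → g = 0)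
    (hYfact : PYX = PYU * PUX)
    (hWfact : PWX = PWU * PUX) :
    (∃ Pplus : Matrix 𝒰 𝒲 ℝ, Pplus * PWU = 1 ∧ PYX = PYU * Pplus * PWX) ∧
      (Fintype.card 𝒲 = Fintype.card 𝒰 →
        ∀ P1 P2 : Matrix 𝒰 𝒲 ℝ, P1 * PWU = 1 → P2 * PWU = 1 → P1 = P2) :=
  stmt8_general pu pw PUW PWU PUX PWX PYU PYX hpu hpw hBayes hcomplete hYfact hWfact
end

section
/- Let U, X, Y, W satisfy the linear Gaussian model U = ε_U, X = α_U U + α₀ + ε_X, W = β_U U + β₀ + ε_W, Y = γ_U U + γ_X X + γ₀ + ε_Y, with independent standard normal noises and α_U β_U ≠ 0. Then with b_w = ((α_U²+1)γ_X + γ_U α_U)/(β_U α_U) and b₀ = γ₀ + γ_X α₀ − b_w β₀, the identity E[Y|X] = E[b_w W + b₀ | X] holds. -/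
/-!
Write `X`, `Y` and `b_w W + b₀` as affine functions of the noise vector
`ε = (ε_U, ε_X, ε_W, ε_Y)`. `Y` and `b_w W + b₀` have the same constant term, so their difference
is a linear form in `ε` whose coefficient vector is orthogonal to that of `X`. Linear forms in `ε`
are jointly Gaussian, so uncorrelated ones are independent; hence the conditional expectation of
the difference given `X` is its mean, which is `0`.
-/

open MeasureTheory ProbabilityTheory

structure IsStdGaussianFamily {Ω ι : Type*} [MeasurableSpace Ω] (ε : ι → Ω → ℝ)
    (μ : Measure Ω) : Prop where
  measurable : ∀ i, Measurable (ε i)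
  hasLaw : ∀ i, HasLaw (ε i) (gaussianReal 0 1) μ
  indep : iIndepFun ε μ

namespace IsStdGaussianFamily

variable {Ω ι : Type*} [MeasurableSpace Ω] {μ : Measure Ω} [Fintype ι] {ε : ι → Ω → ℝ}

lemma hasGaussianLaw (hε : IsStdGaussianFamily ε μ) : HasGaussianLaw (fun ω ↦ (ε · ω)) μ :=
  hε.indep.hasGaussianLaw fun i ↦ (hε.hasLaw i).hasGaussianLaw

lemma covariance_eq_ite [DecidableEq ι] (hε : IsStdGaussianFamily ε μ) (i j : ι) :
    cov[ε i, ε j; μ] = if i = j then 1 else 0 := by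
  split_ifs with hij
  · subst hij
    rw [covariance_self (hε.hasLaw i).aemeasurable, (hε.hasLaw i).variance_eq,
      variance_id_gaussianReal]
    rfl
  · exact (hε.indep.indepFun hij).covariance_eq_zero (hε.hasGaussianLaw.eval i).memLp_two
      (hε.hasGaussianLaw.eval j).memLp_two

lemma covariance_sum_mul_sum_mul [IsFiniteMeasure μ] (hε : IsStdGaussianFamily ε μ)
    (a b : ι → ℝ) :
    cov[fun ω ↦ ∑ i, a i * ε i ω, fun ω ↦ ∑ i, b i * ε i ω; μ] = ∑ i, a i * b i := by
  classical
  rw [covariance_fun_sum_fun_sum (fun i ↦ (hε.hasGaussianLaw.eval i).memLp_two.const_mul (a i))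
    (fun i ↦ (hε.hasGaussianLaw.eval i).memLp_two.const_mul (b i))]
  simp only [covariance_const_mul_left, covariance_const_mul_right, hε.covariance_eq_ite,
    mul_ite, mul_one, mul_zero, Finset.sum_ite_eq, Finset.mem_univ, if_true]
  exact Finset.sum_congr rfl fun _ _ ↦ mul_comm _ _

lemma integral_sum_mul (hε : IsStdGaussianFamily ε μ) (b : ι → ℝ) :
    μ[fun ω ↦ ∑ i, b i * ε i ω] = 0 := by
  rw [integral_finsetSum _ fun i _ ↦ (hε.hasGaussianLaw.eval i).integrable.const_mul (b i)]
  simp [integral_const_mul, (hε.hasLaw _).integral_eq, integral_id_gaussianReal]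

lemma indepFun_sum_mul_of_sum_mul_eq_zero [IsFiniteMeasure μ] (hε : IsStdGaussianFamily ε μ)
    {a b : ι → ℝ} (hab : ∑ i, a i * b i = 0) :
    IndepFun (fun ω ↦ ∑ i, a i * ε i ω) (fun ω ↦ ∑ i, b i * ε i ω) μ := by
  refine HasGaussianLaw.indepFun_of_covariance_eq_zero ?_
    (by rw [hε.covariance_sum_mul_sum_mul, hab])
  let L : (ι → ℝ) →L[ℝ] ℝ × ℝ :=
    (∑ i, a i • ContinuousLinearMap.proj i).prod (∑ i, b i • ContinuousLinearMap.proj i)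
  simpa [L] using hε.hasGaussianLaw.map_fun L

variable [IsProbabilityMeasure μ]

lemma condExp_sum_mul_ae_eq_zero_of_sum_mul_eq_zero (hε : IsStdGaussianFamily ε μ)
    {a b : ι → ℝ} (hab : ∑ i, a i * b i = 0) (c : ℝ) :
    μ[fun ω ↦ ∑ i, b i * ε i ω |
      MeasurableSpace.comap (fun ω ↦ ∑ i, a i * ε i ω + c) inferInstance] =ᵐ[μ] 0 := by
  have hmeas := hε.measurable
  have hX : Measurable fun ω ↦ ∑ i, a i * ε i ω + c := by fun_prop
  have hZ : Measurable fun ω ↦ ∑ i, b i * ε i ω := by fun_prop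
  have hind : IndepFun (fun ω ↦ ∑ i, b i * ε i ω) (fun ω ↦ ∑ i, a i * ε i ω + c) μ :=
    (hε.indepFun_sum_mul_of_sum_mul_eq_zero hab).symm.comp measurable_id
      (measurable_add_const c)
  calc μ[fun ω ↦ ∑ i, b i * ε i ω | MeasurableSpace.comap _ inferInstance]
      =ᵐ[μ] fun _ ↦ μ[fun ω ↦ ∑ i, b i * ε i ω] :=
        condExp_indep_eq hZ.comap_le hX.comap_le (comap_measurable _).stronglyMeasurable
          ((IndepFun_iff_Indep _ _ _).mp hind)
    _ = 0 := by rw [hε.integral_sum_mul]; rfl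

lemma condExp_sum_mul_add_ae_eq_of_sum_mul_eq (hε : IsStdGaussianFamily ε μ)
    {a b b' : ι → ℝ} (hb : ∑ i, a i * b i = ∑ i, a i * b' i) (c d : ℝ) :
    μ[fun ω ↦ ∑ i, b i * ε i ω + d |
      MeasurableSpace.comap (fun ω ↦ ∑ i, a i * ε i ω + c) inferInstance] =ᵐ[μ]
    μ[fun ω ↦ ∑ i, b' i * ε i ω + d |
      MeasurableSpace.comap (fun ω ↦ ∑ i, a i * ε i ω + c) inferInstance] := by
  have hint (v : ι → ℝ) : Integrable (fun ω ↦ ∑ i, v i * ε i ω) μ :=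
    integrable_finsetSum _ fun i _ ↦ (hε.hasGaussianLaw.eval i).integrable.const_mul (v i)
  have hdiff : ∑ i, a i * (b i - b' i) = 0 := by
    simp only [mul_sub, Finset.sum_sub_distrib, hb, sub_self]
  have hsplit : (fun ω ↦ ∑ i, b i * ε i ω + d) =
      (fun ω ↦ ∑ i, b' i * ε i ω + d) + fun ω ↦ ∑ i, (b i - b' i) * ε i ω := by
    ext ω
    simp only [Pi.add_apply, sub_mul, Finset.sum_sub_distrib]
    ring
  have hV : Integrable (fun ω ↦ ∑ i, b' i * ε i ω + d) μ := (hint b').add (integrable_const d)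
  rw [hsplit]
  filter_upwards [condExp_add hV (hint _) _,
    hε.condExp_sum_mul_ae_eq_zero_of_sum_mul_eq_zero hdiff c] with ω hadd hzero
  rw [hadd, Pi.add_apply, hzero, Pi.zero_apply, add_zero]

end IsStdGaussianFamily

/-- Linear Gaussian model: `U = ε_U`, `X = α_U U + α₀ + ε_X`, `W = β_U U + β₀ + ε_W`,
`Y = γ_U U + γ_X X + γ₀ + ε_Y`, with i.i.d. standard normal noises and `α_U β_U ≠ 0`.
With `b_w = ((α_U²+1)γ_X + γ_U α_U)/(β_U α_U)` and `b₀ = γ₀ + γ_X α₀ − b_w β₀`, one has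
`E[Y|X] = E[b_w W + b₀ | X]` (conditional expectations given `σ(X)`). -/
theorem stmt13 {Ω : Type*} [MeasurableSpace Ω] (μ : Measure Ω) [IsProbabilityMeasure μ]
    (εU εX εW εY : Ω → ℝ)
    (hmU : Measurable εU) (hmX : Measurable εX) (hmW : Measurable εW) (hmY : Measurable εY)
    (hlawU : μ.map εU = gaussianReal 0 1) (hlawX : μ.map εX = gaussianReal 0 1)
    (hlawW : μ.map εW = gaussianReal 0 1) (hlawY : μ.map εY = gaussianReal 0 1)
    (hindep : iIndepFun (m := fun _ : Fin 4 => (inferInstance : MeasurableSpace ℝ))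
      ![εU, εX, εW, εY] μ)
    (αU α₀ βU β₀ γU γX γ₀ : ℝ) (hαβ : αU * βU ≠ 0)
    (X W Y : Ω → ℝ)
    (hX : X = fun ω => αU * εU ω + α₀ + εX ω)
    (hW : W = fun ω => βU * εU ω + β₀ + εW ω)
    (hY : Y = fun ω => γU * εU ω + γX * X ω + γ₀ + εY ω) :
    μ[Y | MeasurableSpace.comap X (inferInstance : MeasurableSpace ℝ)]
      =ᵐ[μ]
    μ[fun ω => ((αU ^ 2 + 1) * γX + γU * αU) / (βU * αU) * W ω +
        (γ₀ + γX * α₀ - ((αU ^ 2 + 1) * γX + γU * αU) / (βU * αU) * β₀)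
      | MeasurableSpace.comap X (inferInstance : MeasurableSpace ℝ)] := by
  set bw := ((αU ^ 2 + 1) * γX + γU * αU) / (βU * αU)
  let ε : Fin 4 → Ω → ℝ := ![εU, εX, εW, εY]
  have hε : IsStdGaussianFamily ε μ := by
    refine ⟨fun i ↦ ?_, fun i ↦ ?_, hindep⟩ <;> fin_cases i
    exacts [hmU, hmX, hmW, hmY, ⟨hmU.aemeasurable, hlawU⟩, ⟨hmX.aemeasurable, hlawX⟩,
      ⟨hmW.aemeasurable, hlawW⟩, ⟨hmY.aemeasurable, hlawY⟩]
  have hXε : X = fun ω ↦ ∑ i, ![αU, 1, 0, 0] i * ε i ω + α₀ := by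
    ext ω; simp only [hX, ε, Fin.sum_univ_four, Matrix.cons_val]; ring
  have hYε : Y = fun ω ↦ ∑ i, ![γU + γX * αU, γX, 0, 1] i * ε i ω + (γ₀ + γX * α₀) := by
    ext ω; simp only [hY, hX, ε, Fin.sum_univ_four, Matrix.cons_val]; ring
  have hWε : (fun ω ↦ bw * W ω + (γ₀ + γX * α₀ - bw * β₀)) =
      fun ω ↦ ∑ i, ![bw * βU, 0, bw, 0] i * ε i ω + (γ₀ + γX * α₀) := by
    ext ω; simp only [hW, ε, Fin.sum_univ_four, Matrix.cons_val]; ring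
  rw [hYε, hWε, hXε]
  refine hε.condExp_sum_mul_add_ae_eq_of_sum_mul_eq ?_ _ _
  have hαU : αU ≠ 0 := left_ne_zero_of_mul hαβ
  have hβU : βU ≠ 0 := right_ne_zero_of_mul hαβ
  simp only [Fin.sum_univ_four, Matrix.cons_val, bw]
  field_simp
  ring
end

section
/- In the linear Gaussian model U = ε_U, X = α_U U + α₀ + ε_X, W = β_U U + β₀ + ε_W, Y = γ_U U + γ₀ + ε_Y with i.i.d. standard normal noises and β_U ≠ 0, set ρ = γ_U/β_U and assume 1 − ρ² > 0. Then the bridge function h(w,y) = (1−ρ²)^{-1/2} φ((y − ρw + ρβ₀ − γ₀)/√(1−ρ²)) satisfies ∫ (∫ |h(w,y)|² p(w) dw)^{1/2} dy = ((β_U² + γ_U² + 2β_U²γ_U²)/(β_U² − γ_U²))^{1/4} < ∞, i.e. h is Bochner integrable. -/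
open MeasureTheory

/-!
Both factors of the inner integrand are Gaussian in `w`, so completing the square in `w` turns the
inner integral into a constant multiple of a Gaussian in `y`, of variance `s + 2σρ²` where
`s = 1 - ρ²` and `σ = 1 + β_U²`. Its square root is again Gaussian in `y`, and integrating it gives
`((s + 2σρ²) / s) ^ (1/4)`, which is the stated ratio once `ρ = γ_U / β_U` is substituted.
-/

open Real

lemma integral_exp_neg_mul_sq_sub (b μ : ℝ) :
    ∫ x, exp (-(b * (x - μ) ^ 2)) = √(π / b) := by
  simpa [neg_mul] using
    (integral_sub_right_eq_self (fun x ↦ exp (-b * x ^ 2)) μ).trans (integral_gaussian b)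

lemma mul_sq_add_mul_sq_eq {a b r : ℝ} (hab : a * r ^ 2 + b ≠ 0) (t μ w : ℝ) :
    a * (r * w - t) ^ 2 + b * (w - μ) ^ 2 =
      (a * r ^ 2 + b) * (w - (a * r * t + b * μ) / (a * r ^ 2 + b)) ^ 2
        + a * b / (a * r ^ 2 + b) * (t - r * μ) ^ 2 := by
  field_simp
  ring

lemma integral_exp_neg_mul_sq_add_mul_sq {a b : ℝ} (ha : 0 ≤ a) (hb : 0 < b) (r t μ : ℝ) :
    ∫ w, exp (-(a * (r * w - t) ^ 2 + b * (w - μ) ^ 2)) =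
      √(π / (a * r ^ 2 + b)) * exp (-(a * b / (a * r ^ 2 + b) * (t - r * μ) ^ 2)) := by
  have hD : a * r ^ 2 + b ≠ 0 := by positivity
  simp_rw [mul_sq_add_mul_sq_eq hD, neg_add, exp_add]
  rw [integral_mul_const, integral_exp_neg_mul_sq_sub]

lemma integral_sqrt_mul_exp_neg_mul_sq_sub {K : ℝ} (hK : 0 ≤ K) (κ μ : ℝ) :
    ∫ y, √(K * exp (-(κ * (y - μ) ^ 2))) = √K * √(2 * π / κ) := by
  have hsqrt : ∀ y, √(K * exp (-(κ * (y - μ) ^ 2))) = √K * exp (-(κ / 2 * (y - μ) ^ 2)) := by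
    intro y
    rw [sqrt_mul hK, ← exp_half]
    ring_nf
  simp_rw [hsqrt]
  rw [integral_const_mul, integral_exp_neg_mul_sq_sub, div_div_eq_mul_div, mul_comm π]

lemma inv_sqrt_mul_stdNormalPDF_div_sqrt {v : ℝ} (hv : 0 ≤ v) (x : ℝ) :
    (√v)⁻¹ * stdNormalPDF (x / √v) = (√(2 * π * v))⁻¹ * exp (-(x ^ 2 / (2 * v))) := by
  rw [stdNormalPDF, sqrt_mul' _ hv, div_pow, sq_sqrt hv, mul_inv, neg_div, div_div, mul_comm v 2]
  ring

lemma integral_sq_gaussian_mul_gaussian {s σ : ℝ} (hs : 0 < s) (hσ : 0 < σ) (ρ μ ν y : ℝ) :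
    ∫ w, ((√s)⁻¹ * stdNormalPDF ((y - ρ * w + ρ * μ - ν) / √s)) ^ 2
        * ((√σ)⁻¹ * stdNormalPDF ((w - μ) / √σ))
      = (2 * π * s)⁻¹ * (√(2 * π * σ))⁻¹ * √(π / (s⁻¹ * ρ ^ 2 + (2 * σ)⁻¹))
        * exp (-(s⁻¹ * (2 * σ)⁻¹ / (s⁻¹ * ρ ^ 2 + (2 * σ)⁻¹) * (y - ν) ^ 2)) := by
  have hintegrand : ∀ w, ((√s)⁻¹ * stdNormalPDF ((y - ρ * w + ρ * μ - ν) / √s)) ^ 2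
        * ((√σ)⁻¹ * stdNormalPDF ((w - μ) / √σ))
      = (2 * π * s)⁻¹ * (√(2 * π * σ))⁻¹ *
        exp (-(s⁻¹ * (ρ * w - (y + ρ * μ - ν)) ^ 2 + (2 * σ)⁻¹ * (w - μ) ^ 2)) := by
    intro w
    rw [inv_sqrt_mul_stdNormalPDF_div_sqrt hs.le, inv_sqrt_mul_stdNormalPDF_div_sqrt hσ.le,
      mul_pow, inv_pow, sq_sqrt (by positivity), ← exp_nat_mul, neg_add, exp_add]
    ring_nf
  simp_rw [hintegrand]
  rw [integral_const_mul, integral_exp_neg_mul_sq_add_mul_sq (by positivity) (by positivity)]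
  ring_nf

theorem integral_sqrt_integral_sq_gaussian_mul_gaussian {s σ : ℝ} (hs : 0 < s) (hσ : 0 < σ)
    (ρ μ ν : ℝ) :
    ∫ y, √(∫ w, ((√s)⁻¹ * stdNormalPDF ((y - ρ * w + ρ * μ - ν) / √s)) ^ 2
        * ((√σ)⁻¹ * stdNormalPDF ((w - μ) / √σ)))
      = ((s + 2 * σ * ρ ^ 2) / s) ^ (1 / 4 : ℝ) := by
  simp_rw [integral_sq_gaussian_mul_gaussian hs hσ]
  rw [integral_sqrt_mul_exp_neg_mul_sq_sub (by positivity)]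
  rw [one_div, eq_rpow_inv (by positivity) (by positivity) four_ne_zero, rpow_ofNat,
    show ∀ L : ℝ, L ^ 4 = (L ^ 2) ^ 2 by intro L; ring, mul_pow, sq_sqrt (by positivity),
    sq_sqrt (by positivity), mul_pow, mul_pow, mul_pow, inv_pow, inv_pow, sq_sqrt (by positivity),
    sq_sqrt (by positivity)]
  field_simp
  ring

/-- Bochner integrability of the bridge function in the linear Gaussian model:
with `ρ = γ_U/β_U`, `1 - ρ² > 0`, `W ~ N(β₀, 1 + β_U²)` with density `p`, and
`h(w,y) = (1-ρ²)^{-1/2} φ((y - ρw + ρβ₀ - γ₀)/√(1-ρ²))`, one has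
`∫ (∫ h(w,y)² p(w) dw)^{1/2} dy = ((β_U² + γ_U² + 2β_U²γ_U²)/(β_U² - γ_U²))^{1/4}`. -/
theorem stmt14 (βU β₀ γU γ₀ : ℝ) (hβU : βU ≠ 0)
    (hρ : 0 < 1 - (γU / βU) ^ 2) :
    ∫ y : ℝ, Real.sqrt (∫ w : ℝ,
        ((Real.sqrt (1 - (γU / βU) ^ 2))⁻¹ *
          stdNormalPDF ((y - (γU / βU) * w + (γU / βU) * β₀ - γ₀) /
            Real.sqrt (1 - (γU / βU) ^ 2))) ^ 2
        * ((Real.sqrt (1 + βU ^ 2))⁻¹ * stdNormalPDF ((w - β₀) / Real.sqrt (1 + βU ^ 2))))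
      = ((βU ^ 2 + γU ^ 2 + 2 * βU ^ 2 * γU ^ 2) / (βU ^ 2 - γU ^ 2)) ^ ((1 : ℝ) / 4) := by
  rw [integral_sqrt_integral_sq_gaussian_mul_gaussian hρ (by positivity)]
  congr 1
  field_simp
  ring
end

section
/- Let He_n denote the probabilist's Hermite polynomials. For |t| < 1 and real x, y, the Mehler series Σ_{n≥0} (tⁿ/n!) He_n(x) He_n(y) converges and equals (1−t²)^{-1/2} exp((txy − (t²/2)(x² + y²))/(1−t²)). -/
/-!
Both sides of `√(2π) He_n(x) = ∫ (x + is)ⁿ e^{-s²/2} ds` satisfy the three-term recurrence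
`He_{n+1}(x) = x He_n(x) - n He_{n-1}(x)`, the integral by an integration by parts against the
Gaussian. Substituting this for `He_n(x)` and `He_n(y)`, `2π` times the Mehler series becomes the
termwise integral over `ℝ²` of the exponential series of `t(x + is)(y + iu)` against
`e^{-(s² + u²)/2}`. For `|t| < 1` the series of absolute values is still integrable, since
`|t| |x + is| |y + iu| ≤ |t| (x² + s² + y² + u²) / 2`, so sum and integral commute, and the
integral of `exp(t(x + is)(y + iu) - (s² + u²)/2)` is computed by completing the square in `u` and
then in `s`.
-/

/-- The probabilist's Hermite polynomial `He_n` evaluated at a real number. -/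
noncomputable def hermiteEval (n : ℕ) (x : ℝ) : ℝ :=
  Polynomial.aeval x (Polynomial.hermite n)

open MeasureTheory Complex Polynomial Real
open scoped Nat

theorem Polynomial.derivative_hermite_succ (n : ℕ) :
    derivative (hermite (n + 1)) = (n + 1 : ℤ[X]) * hermite n := by
  induction n with
  | zero => simp
  | succ n ih =>
    rw [hermite_succ (n + 1), derivative_sub, derivative_mul, derivative_X, ih, derivative_mul,
      hermite_succ n]
    simp only [derivative_add, derivative_natCast, derivative_one]
    push_cast
    ring

theorem Polynomial.derivative_hermite (n : ℕ) :
    derivative (hermite n) = n * hermite (n - 1) := by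
  cases n with
  | zero => simp
  | succ n => simpa using derivative_hermite_succ n

theorem hermiteEval_succ (n : ℕ) (x : ℝ) :
    hermiteEval (n + 1) x = x * hermiteEval n x - n * hermiteEval (n - 1) x := by
  simp [hermiteEval, hermite_succ, derivative_hermite]

theorem norm_cexp_neg_sq_div_two (s : ℝ) :
    ‖cexp (-(s : ℂ) ^ 2 / 2)‖ = Real.exp (-s ^ 2 / 2) := by
  rw [Complex.norm_exp]
  norm_cast

theorem integrable_eval_mul_cexp_neg_sq_div_two (p : ℂ[X]) :
    Integrable fun s : ℝ => p.eval (s : ℂ) * cexp (-(s : ℂ) ^ 2 / 2) := by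
  induction p using Polynomial.induction_on' with
  | add p q hp hq => exact (hp.add hq).congr (.of_forall fun s => by simp [add_mul])
  | monomial k c =>
    have h := ((integrable_rpow_mul_exp_neg_mul_sq (b := 1 / 2) (by norm_num) (s := k)
      (by linarith [k.cast_nonneg (α := ℝ)])).ofReal (𝕜 := ℂ)).const_mul c
    refine h.congr (.of_forall fun s => ?_)
    simp only [Real.rpow_natCast, eval_monomial, RCLike.ofReal_eq_complex_ofReal,
      Complex.ofReal_mul, Complex.ofReal_exp]
    push_cast
    ring_nf

theorem integrable_add_mul_I_pow_mul_cexp (x : ℂ) (n : ℕ) :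
    Integrable fun s : ℝ => (x + s * I) ^ n * cexp (-(s : ℂ) ^ 2 / 2) := by
  refine (integrable_eval_mul_cexp_neg_sq_div_two ((C x + X * C I) ^ n)).congr
    (.of_forall fun s => ?_)
  simp only [eval_pow, eval_add, eval_C, eval_mul, eval_X]

theorem integral_cexp_neg_mul_sq_div_two_add {a : ℝ} (ha : 0 < a) (c d : ℂ) :
    ∫ s : ℝ, cexp (-(a / 2) * s ^ 2 + c * s + d) =
      √(2 * π / a) * cexp (d + c ^ 2 / (2 * a)) := by
  have ha' : (a : ℂ) ≠ 0 := by exact_mod_cast ha.ne'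
  rw [integral_cexp_quadratic (by simpa using ha) c d]
  congr 1
  · rw [show (π : ℂ) / -(-(a / 2)) = ((2 * π / a : ℝ) : ℂ) by push_cast; field_simp,
      Real.sqrt_eq_rpow, Complex.ofReal_cpow (by positivity)]
    norm_num
  · congr 1
    field_simp
    ring

theorem integral_cexp_neg_sq_div_two : ∫ s : ℝ, cexp (-(s : ℂ) ^ 2 / 2) = √(2 * π) := by
  convert integral_cexp_neg_mul_sq_div_two_add one_pos 0 0 using 4 with s
  · push_cast
    ring
  · simp

theorem integral_add_mul_I_pow_succ_mul_cexp (x : ℂ) (n : ℕ) :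
    ∫ s : ℝ, (x + s * I) ^ (n + 1) * cexp (-(s : ℂ) ^ 2 / 2) =
      x * (∫ s : ℝ, (x + s * I) ^ n * cexp (-(s : ℂ) ^ 2 / 2)) -
        n * ∫ s : ℝ, (x + s * I) ^ (n - 1) * cexp (-(s : ℂ) ^ 2 / 2) := by
  set f : ℕ → ℝ → ℂ := fun m s => (x + s * I) ^ m * cexp (-(s : ℂ) ^ 2 / 2)
  have hint : ∀ m, Integrable (f m) := integrable_add_mul_I_pow_mul_cexp x
  have hderiv (s : ℝ) :
      HasDerivAt (fun s => I * f n s) (x * f n s - f (n + 1) s - n * f (n - 1) s) s := by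
    have hs : HasDerivAt (fun s : ℝ => (s : ℂ)) 1 s := (hasDerivAt_id s).ofReal_comp
    have hline : HasDerivAt (fun s : ℝ => x + s * I) I s := by
      simpa using (hs.mul_const I).const_add x
    have hgauss : HasDerivAt (fun s : ℝ => cexp (-(s : ℂ) ^ 2 / 2))
        (cexp (-(s : ℂ) ^ 2 / 2) * -s) s :=
      ((hs.fun_pow 2).neg.div_const 2).cexp.congr_deriv (by simp; ring)
    refine (((hline.fun_pow n).mul hgauss).const_mul I).congr_deriv ?_
    linear_combination (n * (x + s * I) ^ (n - 1) * cexp (-(s : ℂ) ^ 2 / 2) : ℂ) * I_sq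
  have hint₁ : Integrable fun s => x * f n s - f (n + 1) s :=
    ((hint n).const_mul x).sub (hint (n + 1))
  have hint₂ : Integrable fun s => (n : ℂ) * f (n - 1) s := (hint (n - 1)).const_mul n
  have hzero := integral_eq_zero_of_hasDerivAt_of_integrable hderiv (hint₁.sub hint₂)
    ((hint n).const_mul I)
  rw [integral_sub hint₁ hint₂, integral_sub ((hint n).const_mul x) (hint (n + 1)),
    integral_const_mul, integral_const_mul] at hzero
  linear_combination -hzero

theorem integral_add_mul_I_pow_mul_cexp_eq_hermiteEval (x : ℝ) (n : ℕ) :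
    ∫ s : ℝ, (x + s * I) ^ n * cexp (-(s : ℂ) ^ 2 / 2) = √(2 * π) * hermiteEval n x := by
  induction n using Nat.strong_induction_on with
  | _ n ih =>
    cases n with
    | zero => simp [hermiteEval, integral_cexp_neg_sq_div_two]
    | succ m =>
      rw [integral_add_mul_I_pow_succ_mul_cexp, ih m (by omega), ih (m - 1) (by omega),
        hermiteEval_succ]
      push_cast
      ring

theorem hasSum_integral_pow_div_factorial_mul {α : Type*} [MeasurableSpace α] {μ : Measure α}
    {z w : α → ℂ} (hz : AEStronglyMeasurable z μ) (hw : AEStronglyMeasurable w μ)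
    (h : Integrable (fun a => Real.exp ‖z a‖ * ‖w a‖) μ) :
    HasSum (fun n : ℕ => ∫ a, z a ^ n / n ! * w a ∂μ) (∫ a, cexp (z a) * w a ∂μ) := by
  have hbound (a : α) :
      HasSum (fun n : ℕ => ‖z a‖ ^ n / n ! * ‖w a‖) (Real.exp ‖z a‖ * ‖w a‖) := by
    have h := NormedSpace.expSeries_div_hasSum_exp ‖z a‖
    rw [← Real.exp_eq_exp_ℝ] at h
    exact h.mul_right _
  have hsum (a : α) : HasSum (fun n : ℕ => z a ^ n / n ! * w a) (cexp (z a) * w a) := by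
    have h := NormedSpace.expSeries_div_hasSum_exp (z a)
    rw [← Complex.exp_eq_exp_ℂ] at h
    exact h.mul_right _
  have hmeas (n : ℕ) : AEStronglyMeasurable (fun a => z a ^ n / n ! * w a) μ := by fun_prop
  have hnorm (n : ℕ) (a : α) : ‖z a ^ n / n ! * w a‖ = ‖z a‖ ^ n / n ! * ‖w a‖ := by simp
  exact hasSum_integral_of_dominated_convergence _ hmeas
    (fun n => .of_forall fun a => (hnorm n a).le) (.of_forall fun a => (hbound a).summable)
    (h.congr (.of_forall fun a => (hbound a).tsum_eq.symm)) (.of_forall hsum)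

section Mehler

variable (t x y : ℝ)

theorem integrable_mehler_majorant (ht : |t| < 1) :
    Integrable fun p : ℝ × ℝ => Real.exp ‖(t : ℂ) * (x + p.1 * I) * (y + p.2 * I)‖ *
      ‖cexp (-(p.1 : ℂ) ^ 2 / 2) * cexp (-(p.2 : ℂ) ^ 2 / 2)‖ := by
  set b := (1 - |t|) / 2
  have hb : 0 < b := by simp only [b]; linarith
  have hgauss : Integrable fun p : ℝ × ℝ => Real.exp (|t| * (x ^ 2 + y ^ 2) / 2) *
      (Real.exp (-b * p.1 ^ 2) * Real.exp (-b * p.2 ^ 2)) := by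
    rw [Measure.volume_eq_prod]
    exact ((integrable_exp_neg_mul_sq hb).mul_prod (integrable_exp_neg_mul_sq hb)).const_mul _
  refine hgauss.mono' (by fun_prop) (.of_forall fun ⟨s, u⟩ => ?_)
  have hs : ‖(x : ℂ) + s * I‖ ^ 2 = x ^ 2 + s ^ 2 := by rw [Complex.sq_norm, normSq_add_mul_I]
  have hu : ‖(y : ℂ) + u * I‖ ^ 2 = y ^ 2 + u ^ 2 := by rw [Complex.sq_norm, normSq_add_mul_I]
  have hamgm := mul_le_mul_of_nonneg_left
    (two_mul_le_add_sq ‖(x : ℂ) + s * I‖ ‖(y : ℂ) + u * I‖) (abs_nonneg t)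
  rw [Real.norm_of_nonneg (by positivity), norm_mul, norm_mul, norm_mul, norm_cexp_neg_sq_div_two,
    norm_cexp_neg_sq_div_two, Complex.norm_real, Real.norm_eq_abs, ← Real.exp_add,
    ← Real.exp_add, ← Real.exp_add, ← Real.exp_add, Real.exp_le_exp]
  simp only [b]
  nlinarith

theorem integral_mehler_term (n : ℕ) :
    ∫ p : ℝ × ℝ, ((t : ℂ) * (x + p.1 * I) * (y + p.2 * I)) ^ n / n ! *
      (cexp (-(p.1 : ℂ) ^ 2 / 2) * cexp (-(p.2 : ℂ) ^ 2 / 2)) =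
      ((2 * π * (t ^ n / n ! * hermiteEval n x * hermiteEval n y) : ℝ) : ℂ) := by
  have hsplit (p : ℝ × ℝ) : ((t : ℂ) * (x + p.1 * I) * (y + p.2 * I)) ^ n / n ! *
      (cexp (-(p.1 : ℂ) ^ 2 / 2) * cexp (-(p.2 : ℂ) ^ 2 / 2)) =
      (t : ℂ) ^ n / n ! * (((x + p.1 * I) ^ n * cexp (-(p.1 : ℂ) ^ 2 / 2)) *
        ((y + p.2 * I) ^ n * cexp (-(p.2 : ℂ) ^ 2 / 2))) := by
    rw [mul_pow, mul_pow]
    ring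
  have h2π : (√(2 * π) : ℂ) * √(2 * π) = 2 * π := by
    rw [← Complex.ofReal_mul, Real.mul_self_sqrt (by positivity)]
    push_cast
    ring
  simp_rw [hsplit]
  rw [integral_const_mul, Measure.volume_eq_prod,
    integral_prod_mul (fun s : ℝ => (x + s * I) ^ n * cexp (-(s : ℂ) ^ 2 / 2))
      (fun u : ℝ => (y + u * I) ^ n * cexp (-(u : ℂ) ^ 2 / 2)),
    integral_add_mul_I_pow_mul_cexp_eq_hermiteEval,
    integral_add_mul_I_pow_mul_cexp_eq_hermiteEval]
  push_cast
  linear_combination (t : ℂ) ^ n / n ! * hermiteEval n x * hermiteEval n y * h2π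

theorem integral_mehler_kernel (ht : |t| < 1) :
    ∫ p : ℝ × ℝ, cexp ((t : ℂ) * (x + p.1 * I) * (y + p.2 * I)) *
      (cexp (-(p.1 : ℂ) ^ 2 / 2) * cexp (-(p.2 : ℂ) ^ 2 / 2)) =
      ((2 * π * ((√(1 - t ^ 2))⁻¹ *
        Real.exp ((t * x * y - t ^ 2 / 2 * (x ^ 2 + y ^ 2)) / (1 - t ^ 2))) : ℝ) : ℂ) := by
  have ht2 : 0 < 1 - t ^ 2 := sub_pos.2 ((sq_lt_one_iff_abs_lt_one t).2 ht)
  have hint : Integrable (fun p : ℝ × ℝ => cexp ((t : ℂ) * (x + p.1 * I) * (y + p.2 * I)) *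
      (cexp (-(p.1 : ℂ) ^ 2 / 2) * cexp (-(p.2 : ℂ) ^ 2 / 2))) (volume.prod volume) :=
    (integrable_mehler_majorant t x y ht).mono' (by fun_prop) (.of_forall fun p => by
      rw [norm_mul]
      gcongr
      exact norm_exp_le_exp_norm _)
  have hinner (s : ℝ) : ∫ u : ℝ, cexp ((t : ℂ) * (x + s * I) * (y + u * I)) *
      (cexp (-(s : ℂ) ^ 2 / 2) * cexp (-(u : ℂ) ^ 2 / 2)) =
      √(2 * π) * cexp (-((1 - t ^ 2 : ℝ) / 2) * s ^ 2 + (I * (t * y - t ^ 2 * x)) * s +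
        (t * x * y - t ^ 2 * x ^ 2 / 2)) := by
    have hquad (u : ℝ) : cexp ((t : ℂ) * (x + s * I) * (y + u * I)) *
        (cexp (-(s : ℂ) ^ 2 / 2) * cexp (-(u : ℂ) ^ 2 / 2)) =
        cexp (-((1 : ℝ) / 2) * u ^ 2 + (I * t * (x + s * I)) * u +
          (t * (x + s * I) * y - s ^ 2 / 2)) := by
      rw [← Complex.exp_add, ← Complex.exp_add]
      push_cast
      ring_nf
    simp_rw [hquad]
    rw [integral_cexp_neg_mul_sq_div_two_add one_pos, div_one]
    congr 2
    push_cast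
    linear_combination
      (t ^ 2 * x ^ 2 / 2 + I * t ^ 2 * x * s + t ^ 2 * s ^ 2 * (I ^ 2 - 1) / 2) * I_sq
  have hsqrt : √(2 * π) * √(2 * π / (1 - t ^ 2)) = 2 * π * (√(1 - t ^ 2))⁻¹ := by
    rw [Real.sqrt_div (by positivity), ← mul_div_assoc, Real.mul_self_sqrt (by positivity),
      div_eq_mul_inv]
  have hexp : (t * x * y - t ^ 2 * x ^ 2 / 2 : ℂ) +
      (I * (t * y - t ^ 2 * x)) ^ 2 / (2 * (1 - t ^ 2 : ℝ)) =
      (((t * x * y - t ^ 2 / 2 * (x ^ 2 + y ^ 2)) / (1 - t ^ 2) : ℝ) : ℂ) := by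
    have h1 : (1 - t ^ 2 : ℂ) ≠ 0 := by exact_mod_cast ht2.ne'
    rw [mul_pow, I_sq]
    push_cast
    field_simp
    ring
  rw [Measure.volume_eq_prod, integral_prod _ hint]
  simp_rw [hinner]
  rw [integral_const_mul, integral_cexp_neg_mul_sq_div_two_add ht2, hexp, ← Complex.ofReal_exp,
    ← mul_assoc, ← Complex.ofReal_mul, hsqrt]
  push_cast
  ring

end Mehler

/-- Mehler's formula for the probabilist's Hermite polynomials: for `|t| < 1`,
`Σ_{n≥0} (tⁿ/n!) He_n(x) He_n(y)` converges to
`(1−t²)^{-1/2} exp((txy − (t²/2)(x² + y²))/(1−t²))`. -/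
theorem stmt16 (t x y : ℝ) (ht : |t| < 1) :
    HasSum (fun n : ℕ => t ^ n / (n.factorial : ℝ) * hermiteEval n x * hermiteEval n y)
      ((Real.sqrt (1 - t ^ 2))⁻¹ *
        Real.exp ((t * x * y - t ^ 2 / 2 * (x ^ 2 + y ^ 2)) / (1 - t ^ 2))) := by
  have key := hasSum_integral_pow_div_factorial_mul (μ := volume)
    (z := fun p : ℝ × ℝ => (t : ℂ) * (x + p.1 * I) * (y + p.2 * I))
    (w := fun p : ℝ × ℝ => cexp (-(p.1 : ℂ) ^ 2 / 2) * cexp (-(p.2 : ℂ) ^ 2 / 2))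
    (by fun_prop) (by fun_prop) (integrable_mehler_majorant t x y ht)
  simp only [integral_mehler_term, integral_mehler_kernel t x y ht, Complex.hasSum_ofReal] at key
  exact (hasSum_mul_left_iff (by positivity)).mp key
end

section
/- Let (λ_j, u_j, v_j) be the singular value decomposition of a compact operator A : H_W → H_X, let H⁰ be the least-norm solution of AH = b, and suppose Σ_j λ_j^{-2θ} |⟨H⁰, u_j⟩|² < ∞ for some θ ≥ 2. Then the Tikhonov-regularized solution H^λ = (A*A + λI)^{-1}A*b satisfies ‖H^λ − H⁰‖²_{H_W} ≤ O(λ^{min(θ,2)}) as λ → 0; explicitly, ‖H^λ − H⁰‖² ≤ sup_j (λ λ_j^θ/(λ_j² + λ))² · Σ_j λ_j^{-2θ}|⟨H⁰,u_j⟩|². -/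
/-!
In the orthonormal system `u`, the bias `H^λ - H⁰` has coefficients
`-λ c_j / (s_j² + λ) = -(λ s_j^θ / (s_j² + λ)) · s_j^{-θ} c_j`, so by Parseval its squared norm is
the source-condition series weighted by `(λ s_j^θ / (s_j² + λ))²`. For `θ ≥ 2` these weights are
at most `(λ C^{θ-2})²`, so their supremum is finite and bounds the sum.
-/

section Parseval

variable {𝕜 E ι : Type*} [RCLike 𝕜] [NormedAddCommGroup E] [InnerProductSpace 𝕜 E]
  {u : ι → E} {d : ι → 𝕜} {x : E}

theorem Orthonormal.inner_eq_of_hasSum (hu : Orthonormal 𝕜 u) (hx : HasSum (fun j => d j • u j) x)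
    (i : ι) : inner 𝕜 (u i) x = d i := by
  classical
  refine ((innerSL 𝕜 (u i)).hasSum hx).unique ?_
  convert hasSum_ite_eq i (d i) using 2 with j
  rcases eq_or_ne j i with rfl | hji
  · simp [inner_self_eq_norm_sq_to_K, hu.norm_eq_one]
  · simp [hu.inner_eq_zero hji.symm, hji]

theorem Orthonormal.hasSum_norm_sq_of_hasSum (hu : Orthonormal 𝕜 u)
    (hx : HasSum (fun j => d j • u j) x) : HasSum (fun j => ‖d j‖ ^ 2) (‖x‖ ^ 2) := by
  have h := (innerSL 𝕜 x).hasSum hx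
  have hterm : ∀ j, inner 𝕜 x (d j • u j) = ((‖d j‖ ^ 2 : ℝ) : 𝕜) := fun j => by
    rw [inner_smul_right, ← inner_conj_symm, hu.inner_eq_of_hasSum hx, RCLike.mul_conj,
      RCLike.ofReal_pow]
  simp only [innerSL_apply_apply, hterm, inner_self_eq_norm_sq_to_K] at h
  exact_mod_cast h

end Parseval

theorem hasSum_le_iSup_mul_tsum {ι : Type*} {w f : ι → ℝ} {a : ℝ} (hw : BddAbove (Set.range w))
    (hf : Summable f) (hf0 : ∀ j, 0 ≤ f j) (ha : HasSum (fun j => w j * f j) a) :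
    a ≤ (⨆ j, w j) * ∑' j, f j := by
  rw [← tsum_mul_left]
  exact hasSum_le (fun j => mul_le_mul_of_nonneg_right (le_ciSup hw j) (hf0 j)) ha
    (hf.mul_left _).hasSum

theorem tikhonov_residual_sq {s lam c : ℝ} (hs : 0 < s) (hden : s ^ 2 + lam ≠ 0) (θ : ℝ) :
    (s ^ 2 / (s ^ 2 + lam) * c - c) ^ 2
      = (lam * s ^ θ / (s ^ 2 + lam)) ^ 2 * (s ^ (-(2 * θ)) * c ^ 2) := by
  have hcancel : (s ^ θ) ^ 2 * s ^ (-(2 * θ)) = 1 := by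
    rw [← Real.rpow_natCast, ← Real.rpow_mul hs.le, ← Real.rpow_add hs,
      show θ * (2 : ℕ) + -(2 * θ) = 0 by push_cast; ring, Real.rpow_zero]
  field_simp
  linear_combination (-(lam ^ 2 * c ^ 2)) * hcancel

theorem tikhonov_filter_le {s C lam θ : ℝ} (hs : 0 < s) (hsC : s ≤ C) (hlam : 0 < lam)
    (hθ : 2 ≤ θ) : lam * s ^ θ / (s ^ 2 + lam) ≤ lam * C ^ (θ - 2) := by
  have hsplit : s ^ θ = s ^ (θ - 2) * s ^ 2 := by
    rw [← Real.rpow_natCast s 2, ← Real.rpow_add hs]; norm_num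
  have hpow : s ^ (θ - 2) ≤ C ^ (θ - 2) := Real.rpow_le_rpow hs.le hsC (by linarith)
  rw [div_le_iff₀ (by positivity), hsplit]
  have hC : 0 ≤ C ^ (θ - 2) := (Real.rpow_nonneg hs.le _).trans hpow
  calc lam * (s ^ (θ - 2) * s ^ 2) ≤ lam * (C ^ (θ - 2) * (s ^ 2 + lam)) := by gcongr; linarith
    _ = lam * C ^ (θ - 2) * (s ^ 2 + lam) := by ring

theorem stmt18_general {HW : Type*}
    [NormedAddCommGroup HW] [InnerProductSpace ℝ HW]
    (u : ℕ → HW) (s : ℕ → ℝ)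
    (hu : Orthonormal ℝ u)
    (hs : ∀ j, 0 < s j) (C : ℝ) (hsC : ∀ j, s j ≤ C)
    (lam θ : ℝ) (hlam : 0 < lam) (hθ : 2 ≤ θ)
    (c : ℕ → ℝ) (H0 Hlam : HW)
    (hH0 : HasSum (fun j => c j • u j) H0)
    (hsource : Summable (fun j => s j ^ (-(2 * θ)) * (c j) ^ 2))
    (hHlam : HasSum (fun j => ((s j) ^ 2 / ((s j) ^ 2 + lam) * c j) • u j) Hlam) :
    ‖Hlam - H0‖ ^ 2
      ≤ (⨆ j, (lam * s j ^ θ / ((s j) ^ 2 + lam)) ^ 2) *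
        ∑' j, s j ^ (-(2 * θ)) * (c j) ^ 2 := by
  have hbias : HasSum (fun j => ((s j) ^ 2 / ((s j) ^ 2 + lam) * c j - c j) • u j) (Hlam - H0) := by
    simpa only [sub_smul] using hHlam.sub hH0
  have hcoeff (j : ℕ) := tikhonov_residual_sq (c := c j) (hs j) (by have := hs j; positivity) θ
  have hparseval := hu.hasSum_norm_sq_of_hasSum hbias
  simp only [Real.norm_eq_abs, sq_abs, hcoeff] at hparseval
  refine hasSum_le_iSup_mul_tsum ⟨(lam * C ^ (θ - 2)) ^ 2, ?_⟩ hsource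
    (fun j => by have := hs j; positivity) hparseval
  rintro _ ⟨j, rfl⟩
  exact pow_le_pow_left₀ (by have := hs j; positivity) (tikhonov_filter_le (hs j) (hsC j) hlam hθ) 2

/-- Tikhonov regularization bias bound. Let `A : H_W → H_X` be a compact operator with
singular system `(s_j, u_j, v_j)` (so `A u_j = s_j v_j`, `A* v_j = s_j u_j`, singular
values bounded), and let `H⁰ = Σ_j c_j u_j` with `c_j = ⟨u_j, H⁰⟩` satisfy the source
condition `Σ_j s_j^{-2θ} c_j² < ∞` for some `θ ≥ 2`.  Then the Tikhonov-regularized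
solution `H^λ = Σ_j (s_j²/(s_j²+λ)) c_j u_j` satisfies
`‖H^λ − H⁰‖² ≤ sup_j (λ s_j^θ/(s_j² + λ))² · Σ_j s_j^{-2θ} c_j²`. -/
theorem stmt18 {HW HX : Type*}
    [NormedAddCommGroup HW] [InnerProductSpace ℝ HW] [CompleteSpace HW]
    [NormedAddCommGroup HX] [InnerProductSpace ℝ HX] [CompleteSpace HX]
    (A : HW →L[ℝ] HX) (hA : IsCompactOperator ⇑A)
    (u : ℕ → HW) (v : ℕ → HX) (s : ℕ → ℝ)
    (hu : Orthonormal ℝ u) (hv : Orthonormal ℝ v)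
    (hs : ∀ j, 0 < s j) (C : ℝ) (hsC : ∀ j, s j ≤ C)
    (hAu : ∀ j, A (u j) = s j • v j)
    (hAadj : ∀ j, ContinuousLinearMap.adjoint A (v j) = s j • u j)
    (lam θ : ℝ) (hlam : 0 < lam) (hθ : 2 ≤ θ)
    (c : ℕ → ℝ) (H0 Hlam : HW)
    (hc : ∀ j, c j = inner ℝ (u j) H0)
    (hH0 : HasSum (fun j => c j • u j) H0)
    (hsource : Summable (fun j => s j ^ (-(2 * θ)) * (c j) ^ 2))
    (hHlam : HasSum (fun j => ((s j) ^ 2 / ((s j) ^ 2 + lam) * c j) • u j) Hlam) :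
    ‖Hlam - H0‖ ^ 2
      ≤ (⨆ j, (lam * s j ^ θ / ((s j) ^ 2 + lam)) ^ 2) *
        ∑' j, s j ^ (-(2 * θ)) * (c j) ^ 2 :=
  stmt18_general u s hu hs C hsC lam θ hlam hθ c H0 Hlam hH0 hsource hHlam
end
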